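/- arXiv:2401.08802 — 2 statements merged into one kernel-verified Lean document; each statement's English description precedes it below -/
import Mathlib

section
/- Assuming only conditions (LY1) and (LY2) (the covering condition (SC) is not needed), one has sup_j sup_n ‖ℒ_j^n 𝟙‖_∞ < ∞, where 𝟙 denotes the constant function equal to 1. -/
open MeasureTheory ENNReal Filter

universe u

/-- Iterates `ℒ_j^n = ℒ_{j+n-1} ∘ ⋯ ∘ ℒ_{j+1} ∘ ℒ_j` of a sequence of linear operators
acting on spaces of complex-valued functions. -/
noncomputable def iterL {X : ℕ → Type u} (L : ∀ j, (X j → ℂ) →ₗ[ℂ] (X (j+1) → ℂ)) (j : ℕ) :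
    (n : ℕ) → (X j → ℂ) →ₗ[ℂ] (X (j+n) → ℂ)
  | 0 => LinearMap.id
  | n+1 => (L (j+n)).comp (iterL L j n)

/-- The coercion of a real-valued function to a complex-valued function. -/
noncomputable def cR {α : Type u} (h : α → ℝ) : α → ℂ := fun x => (h x : ℂ)

/-- The sequential dynamical systems setup: probability spaces `(X_j, 𝓑_j, m_j)`,
variations `v_j` satisfying (V1)-(V7), maps `T_j : X_j → X_{j+1}` satisfying (V8),
with transfer operators `ℒ_j` satisfying the duality relation,
the Lasota-Yorke conditions (LY1) and (LY2) (the covering condition (SC) is not assumed). -/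
structure SeqDSnoSC where
  X : ℕ → Type u
  measX : ∀ j, MeasurableSpace (X j)
  topX : ∀ j, TopologicalSpace (X j)
  m : ∀ j, @Measure (X j) (measX j)
  mProb : ∀ j, IsProbabilityMeasure (m j)
  /-- the notions of variation -/
  v : ∀ j, (X j → ℂ) → ℝ≥0∞
  V1 : ∀ j (t : ℂ) (h : X j → ℂ), v j (fun x => t * h x) = (‖t‖₊ : ℝ≥0∞) * v j h
  V2 : ∀ j (g h : X j → ℂ), v j (fun x => g x + h x) ≤ v j g + v j h
  Cvar : ℝ≥0∞
  CvarPos : 0 < Cvar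
  CvarFin : Cvar < ⊤
  V3 : ∀ j (h : X j → ℂ), eLpNorm h ⊤ (m j) ≤ eLpNorm h 1 (m j) + Cvar * v j h
  Cone : ℝ≥0∞
  ConeFin : Cone < ⊤
  V4 : ∀ j, v j (fun _ => 1) ≤ Cone
  C5 : ℝ≥0∞
  C5Fin : C5 < ⊤
  V5 : ∀ j (f g : X j → ℂ),
    v j (fun x => f x * g x) ≤ C5 * (eLpNorm f ⊤ (m j) * v j g + eLpNorm g ⊤ (m j) * v j f)
  C6 : ℝ → ℝ≥0∞ → ℝ≥0∞
  C6mono : ∀ ⦃c c' : ℝ⦄ ⦃y y' : ℝ≥0∞⦄, c ≤ c' → y ≤ y' → C6 c y ≤ C6 c' y'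
  V6 : ∀ j (h : X j → ℝ) (c : ℝ), 0 < c → (∀ x, c ≤ h x) →
      v j (cR h) < ⊤ →
      v j (fun x => ((h x : ℂ))⁻¹) ≤ C6 c (v j (cR h) + eLpNorm (cR h) 1 (m j))
  V7 : ∀ j (g : X j → ℂ), @Continuous _ _ (topX j) _ g → (∃ C, ∀ x, ‖g x‖ ≤ C) →
      ∀ ε : ℝ, 0 < ε → ∃ h : X j → ℂ,
        (∃ C, ∀ x, ‖h x‖ ≤ C) ∧ v j h < ⊤ ∧ ∀ x, ‖g x - h x‖ ≤ ε
  /-- the maps `T_j : X_j → X_{j+1}` -/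
  T : ∀ j, X j → X (j+1)
  Tmeas : ∀ j, @Measurable _ _ (measX j) (measX (j+1)) (T j)
  Tac : ∀ j, (m j).map (T j) ≪ m (j+1)
  CV8 : ℝ≥0∞
  CV8Fin : CV8 < ⊤
  V8 : ∀ j (h : X (j+1) → ℂ), v (j+1) h ≤ 1 → v j (fun x => h (T j x)) ≤ CV8
  /-- the transfer operators `ℒ_j` -/
  L : ∀ j, (X j → ℂ) →ₗ[ℂ] (X (j+1) → ℂ)
  Ldual : ∀ j (f : X (j+1) → ℂ) (g : X j → ℂ),
      @Measurable _ _ (measX (j+1)) _ f → @Measurable _ _ (measX j) _ g →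
      (∃ C, ∀ y, ‖f y‖ ≤ C) → (∃ C, ∀ x, ‖g x‖ ≤ C) →
      ∫ x, f (T j x) * g x ∂ (m j) = ∫ y, f y * (L j g) y ∂ (m (j+1))
  CL : ℝ≥0∞
  CLFin : CL < ⊤
  LY1 : ∀ j (h : X j → ℂ),
      eLpNorm (L j h) 1 (m (j+1)) + v (j+1) (L j h) ≤ CL * (eLpNorm h 1 (m j) + v j h)
  ρ : ℝ≥0∞
  ρpos : 0 < ρ
  ρlt : ρ < 1
  K : ℝ≥0∞
  Kge : 1 ≤ K
  KFin : K < ⊤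
  N : ℕ
  LY2 : ∀ j (h : X j → ℝ),
      v (j+N) (iterL L j N (cR h)) ≤ ρ * v j (cR h) + K * eLpNorm (cR h) 1 (m j)

namespace SeqDSnoSC

variable (S : SeqDSnoSC.{u})

/-- The BV norm `‖h‖_BV = ‖h‖_{L¹(m_j)} + v_j(h)`. -/
noncomputable def BV (j : ℕ) (h : S.X j → ℂ) : ℝ≥0∞ := eLpNorm h 1 (S.m j) + S.v j h

/-- The compositions `T_0^j = T_{j-1} ∘ ⋯ ∘ T_1 ∘ T_0`. -/
def T0 : (j : ℕ) → S.X 0 → S.X j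
  | 0 => id
  | j+1 => fun x => S.T j (T0 j x)

end SeqDSnoSC

/-!
The transfer operators are positive and preserve integrals (test the duality relation against
indicators), so each `ℒ_j^n 𝟙` is a.e. a bounded probability density; in particular its `L¹` norm
is `1` and it is a.e. real, which is enough for (LY2) once one knows that a.e.-equal functions have
the same variation (by (V5)) and that `ℒ_j` maps null functions to null functions ((LY1) and (V3)).
Thus `x_n = v(ℒ_j^n 𝟙)` is finite by (LY1), satisfies `x_{n+N} ≤ ρ x_n + K`, and is bounded for
`n < N` uniformly in `j` by (LY1) and (V4); hence `x_n ≤ C + K / (1 - ρ)` for all `j, n`, and (V3)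
turns this into the uniform bound on `‖ℒ_j^n 𝟙‖_∞`.
-/

open scoped ComplexOrder

lemma ENNReal.le_inv_one_sub_mul_of_le_mul_add {ρ x c : ℝ≥0∞} (hρ : ρ < 1) (hx : x ≠ ⊤)
    (h : x ≤ ρ * x + c) : x ≤ (1 - ρ)⁻¹ * c := by
  have hρ' : 1 - ρ ≠ 0 := (tsub_pos_of_lt hρ).ne'
  have h1 : (1 - ρ) * x ≤ c := by
    rw [ENNReal.sub_mul fun _ _ => hx, one_mul]
    exact tsub_le_iff_left.2 h
  calc x = (1 - ρ)⁻¹ * ((1 - ρ) * x) := by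
        rw [← mul_assoc, ENNReal.inv_mul_cancel hρ' (by simp), one_mul]
    _ ≤ (1 - ρ)⁻¹ * c := by gcongr

lemma ENNReal.mul_inv_one_sub_mul_add {ρ : ℝ≥0∞} (hρ : ρ < 1) (c : ℝ≥0∞) :
    ρ * ((1 - ρ)⁻¹ * c) + c = (1 - ρ)⁻¹ * c := by
  have hc : (1 - ρ) * ((1 - ρ)⁻¹ * c) = c := by
    rw [← mul_assoc, ENNReal.mul_inv_cancel (tsub_pos_of_lt hρ).ne' (by simp), one_mul]
  calc ρ * ((1 - ρ)⁻¹ * c) + c = ρ * ((1 - ρ)⁻¹ * c) + (1 - ρ) * ((1 - ρ)⁻¹ * c) := by rw [hc]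
    _ = (1 - ρ)⁻¹ * c := by rw [← add_mul, add_tsub_cancel_of_le hρ.le, one_mul]

lemma ENNReal.le_of_le_mul_add_shift {x : ℕ → ℝ≥0∞} {ρ K C : ℝ≥0∞} {N : ℕ} (hρ : ρ < 1)
    (hx : ∀ n, x n ≠ ⊤) (hinit : ∀ n < N, x n ≤ C) (hrec : ∀ n, x (n + N) ≤ ρ * x n + K)
    (n : ℕ) : x n ≤ C + (1 - ρ)⁻¹ * K := by
  rcases Nat.eq_zero_or_pos N with rfl | hN
  · exact (le_inv_one_sub_mul_of_le_mul_add hρ (hx n) (hrec n)).trans le_add_self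
  induction n using Nat.strong_induction_on with
  | _ n ih =>
    rcases lt_or_ge n N with hn | hn
    · exact (hinit n hn).trans le_self_add
    obtain ⟨m, rfl⟩ := Nat.exists_eq_add_of_le' hn
    calc x (m + N) ≤ ρ * x m + K := hrec m
      _ ≤ ρ * (C + (1 - ρ)⁻¹ * K) + K := by gcongr; exact ih m (by omega)
      _ ≤ C + (1 - ρ)⁻¹ * K := by
        rw [mul_add, add_assoc, mul_inv_one_sub_mul_add hρ]
        gcongr
        exact mul_le_of_le_one_left' hρ.le

lemma ae_nonneg_of_forall_setIntegral_nonneg_complex {α : Type*} [MeasurableSpace α]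
    {μ : Measure α} {G : α → ℂ} (hG : Integrable G μ)
    (h : ∀ s, MeasurableSet s → 0 ≤ ∫ y in s, G y ∂μ) : 0 ≤ᵐ[μ] G := by
  have hre : 0 ≤ᵐ[μ] fun y => (G y).re :=
    ae_nonneg_of_forall_setIntegral_nonneg hG.re fun s hs _ => by
      have hre := integral_re (hG.restrict (s := s))
      simp only [RCLike.re_to_complex] at hre
      exact hre ▸ (Complex.nonneg_iff.1 (h s hs)).1
  have him : (fun y => (G y).im) =ᵐ[μ] 0 :=
    hG.im.ae_eq_zero_of_forall_setIntegral_eq_zero fun s hs _ => by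
      have him := integral_im (hG.restrict (s := s))
      simp only [RCLike.im_to_complex] at him
      exact him ▸ (Complex.nonneg_iff.1 (h s hs)).2.symm
  filter_upwards [hre, him] with y hre him
  exact Complex.nonneg_iff.2 ⟨hre, him.symm⟩

lemma exists_measurable_bounded_real_ae_eq {α : Type u} [MeasurableSpace α] {μ : Measure α}
    {t : α → ℂ} (ht : AEStronglyMeasurable t μ) (ht_top : eLpNorm t ⊤ μ ≠ ⊤) (ht0 : 0 ≤ᵐ[μ] t) :
    ∃ ω : α → ℝ, Measurable ω ∧ 0 ≤ ω ∧ (∃ C, ∀ x, ω x ≤ C) ∧ cR ω =ᵐ[μ] t := by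
  rw [eLpNorm_exponent_top] at ht_top
  set C := (eLpNormEssSup t μ).toReal
  refine ⟨fun x => min ‖ht.mk t x‖ C, ht.stronglyMeasurable_mk.measurable.norm.min measurable_const,
    fun x => le_min (norm_nonneg _) ENNReal.toReal_nonneg, ⟨C, fun x => min_le_right _ _⟩, ?_⟩
  filter_upwards [ht.ae_eq_mk, ht0, ae_le_eLpNormEssSup (f := t) (μ := μ)] with x hmk h0 hC
  have hC' : ‖t x‖ ≤ C := by
    rw [← toReal_enorm]
    exact ENNReal.toReal_mono ht_top hC
  simp only [cR, ← hmk, min_eq_left hC']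
  exact RCLike.norm_of_nonneg' h0

-- Stated through an arbitrary `F`: the two sides live over `j + (a + b)` and `j + a + b`,
-- which are not definitionally equal.
lemma iterL_add {X : ℕ → Type u} (L : ∀ j, (X j → ℂ) →ₗ[ℂ] (X (j+1) → ℂ)) {β : Sort*}
    (j a : ℕ) (g : X j → ℂ) (b : ℕ) (F : ∀ i, (X i → ℂ) → β) :
    F (j + (a + b)) (iterL L j (a + b) g) = F (j + a + b) (iterL L (j + a) b (iterL L j a g)) := by
  induction b generalizing F with
  | zero => rfl
  | succ b ih => exact ih fun i f => F (i + 1) (L i f)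

namespace SeqDSnoSC

variable (S : SeqDSnoSC.{u})

instance instMeasurableSpaceX (i : ℕ) : MeasurableSpace (S.X i) := S.measX i

instance instIsProbabilityMeasure (i : ℕ) : IsProbabilityMeasure (S.m i) := S.mProb i

theorem v_eq_zero_of_ae_eq_zero {i : ℕ} {h : S.X i → ℂ} (hh : h =ᵐ[S.m i] 0) : S.v i h = 0 := by
  set e : S.X i → ℂ := fun x => if h x = 0 then 0 else 1
  have he : e =ᵐ[S.m i] 0 := by
    filter_upwards [hh] with x hx
    simp [e, hx]
  have hfac : (fun x => e x * h x) = h := by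
    funext x
    by_cases hx : h x = 0 <;> simp [e, hx]
  -- `h = e * h` with both factors a.e. zero, so the right-hand side of (V5) vanishes.
  have h5 := S.V5 i e h
  rw [hfac, eLpNorm_congr_ae he, eLpNorm_congr_ae hh, eLpNorm_zero] at h5
  simpa using h5

theorem v_le_of_ae_eq {i : ℕ} {g h : S.X i → ℂ} (hgh : g =ᵐ[S.m i] h) : S.v i g ≤ S.v i h := by
  have hdiff : (fun x => g x - h x) =ᵐ[S.m i] 0 := by
    filter_upwards [hgh] with x hx
    simp [hx]
  have h2 := S.V2 i h fun x => g x - h x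
  simp only [add_sub_cancel, S.v_eq_zero_of_ae_eq_zero hdiff, add_zero] at h2
  exact h2

theorem v_congr_ae {i : ℕ} {g h : S.X i → ℂ} (hgh : g =ᵐ[S.m i] h) : S.v i g = S.v i h :=
  le_antisymm (S.v_le_of_ae_eq hgh) (S.v_le_of_ae_eq hgh.symm)

theorem eLpNorm_top_ne_top {i : ℕ} {h : S.X i → ℂ} (hh : S.BV i h ≠ ⊤) :
    eLpNorm h ⊤ (S.m i) ≠ ⊤ := by
  rw [BV, ENNReal.add_ne_top] at hh
  exact ne_top_of_le_ne_top
    (ENNReal.add_ne_top.2 ⟨hh.1, ENNReal.mul_ne_top S.CvarFin.ne hh.2⟩) (S.V3 i h)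

theorem BV_L_ne_top {i : ℕ} {h : S.X i → ℂ} (hh : S.BV i h ≠ ⊤) : S.BV (i + 1) (S.L i h) ≠ ⊤ :=
  ne_top_of_le_ne_top (ENNReal.mul_ne_top S.CLFin.ne hh) (S.LY1 i h)

theorem L_ae_eq_zero {i : ℕ} {h : S.X i → ℂ} (hh : h =ᵐ[S.m i] 0) :
    S.L i h =ᵐ[S.m (i + 1)] 0 := by
  have hBV : S.BV (i + 1) (S.L i h) = 0 := by
    have h1 := S.LY1 i h
    rw [eLpNorm_congr_ae hh, eLpNorm_zero, S.v_eq_zero_of_ae_eq_zero hh, add_zero,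
      mul_zero] at h1
    exact nonpos_iff_eq_zero.1 h1
  rw [BV, add_eq_zero] at hBV
  have h3 := S.V3 (i + 1) (S.L i h)
  rwa [hBV.1, hBV.2, mul_zero, add_zero, nonpos_iff_eq_zero, eLpNorm_exponent_top,
    eLpNormEssSup_eq_zero_iff] at h3

theorem L_congr_ae {i : ℕ} {g h : S.X i → ℂ} (hgh : g =ᵐ[S.m i] h) :
    S.L i g =ᵐ[S.m (i + 1)] S.L i h := by
  have hdiff : g - h =ᵐ[S.m i] 0 := by
    filter_upwards [hgh] with x hx
    simp [hx]
  filter_upwards [S.L_ae_eq_zero hdiff] with y hy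
  rw [map_sub, Pi.sub_apply, Pi.zero_apply, sub_eq_zero] at hy
  exact hy

theorem iterL_congr_ae {i : ℕ} {g h : S.X i → ℂ} (hgh : g =ᵐ[S.m i] h) (k : ℕ) :
    iterL S.L i k g =ᵐ[S.m (i + k)] iterL S.L i k h := by
  induction k with
  | zero => exact hgh
  | succ k ih => exact S.L_congr_ae ih

theorem v_iterL_N_le {i : ℕ} {t : S.X i → ℂ} {ω : S.X i → ℝ} (hω : cR ω =ᵐ[S.m i] t) :
    S.v (i + S.N) (iterL S.L i S.N t) ≤ S.ρ * S.v i t + S.K * eLpNorm t 1 (S.m i) := by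
  rw [← S.v_congr_ae (S.iterL_congr_ae hω S.N), ← S.v_congr_ae hω, ← eLpNorm_congr_ae hω]
  exact S.LY2 i ω

theorem BV_iterL_le (i : ℕ) (g : S.X i → ℂ) (k : ℕ) :
    S.BV (i + k) (iterL S.L i k g) ≤ max S.CL 1 ^ k * S.BV i g := by
  induction k with
  | zero => simp [iterL]
  | succ k ih =>
    calc S.BV (i + (k + 1)) (iterL S.L i (k + 1) g)
        ≤ S.CL * S.BV (i + k) (iterL S.L i k g) := S.LY1 (i + k) _
      _ ≤ max S.CL 1 * (max S.CL 1 ^ k * S.BV i g) := by gcongr; exact le_max_left _ _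
      _ = max S.CL 1 ^ (k + 1) * S.BV i g := by rw [pow_succ', mul_assoc]

theorem BV_one_le (i : ℕ) : S.BV i (fun _ => 1) ≤ 1 + S.Cone := by
  rw [BV, eLpNorm_const _ one_ne_zero (NeZero.ne _)]
  simpa using S.V4 i

theorem setIntegral_L {i : ℕ} {g : S.X i → ℂ} (hg : Measurable g) (hgb : ∃ C, ∀ x, ‖g x‖ ≤ C)
    {s : Set (S.X (i + 1))} (hs : MeasurableSet s) :
    ∫ y in s, S.L i g y ∂S.m (i + 1) = ∫ x in S.T i ⁻¹' s, g x ∂S.m i := by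
  have hd := S.Ldual i (s.indicator 1) g (measurable_one.indicator hs) hg
    ⟨1, fun y => norm_indicator_le_norm_self 1 y |>.trans (by simp)⟩ hgb
  have hL : (fun y => s.indicator 1 y * S.L i g y) = s.indicator (S.L i g) := by
    ext y
    by_cases hy : y ∈ s <;> simp [hy]
  have hTg : (fun x => s.indicator 1 (S.T i x) * g x) = (S.T i ⁻¹' s).indicator g := by
    ext x
    by_cases hx : S.T i x ∈ s <;> simp [hx]
  rw [hL, hTg, integral_indicator hs, integral_indicator (S.Tmeas i hs)] at hd
  exact hd.symm

def IsBoundedDensity (i : ℕ) (t : S.X i → ℂ) : Prop :=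
  ∃ ω : S.X i → ℝ, Measurable ω ∧ 0 ≤ ω ∧ (∃ C, ∀ x, ω x ≤ C) ∧ cR ω =ᵐ[S.m i] t ∧
    ∫ x, ω x ∂S.m i = 1

variable {S}

theorem IsBoundedDensity.eLpNorm_one_eq {i : ℕ} {t : S.X i → ℂ} (ht : S.IsBoundedDensity i t) :
    eLpNorm t 1 (S.m i) = 1 := by
  obtain ⟨ω, hωm, hω0, ⟨C, hωC⟩, hωt, hω1⟩ := ht
  have hnorm : ∀ x, ‖cR ω x‖ = ω x := fun x => by simp [cR, abs_of_nonneg (hω0 x)]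
  have hint : Integrable (cR ω) (S.m i) :=
    Integrable.of_bound (Complex.measurable_ofReal.comp hωm).aestronglyMeasurable C
      (ae_of_all _ fun x => (hnorm x).trans_le (hωC x))
  rw [← eLpNorm_congr_ae hωt, eLpNorm_one_eq_lintegral_enorm,
    ← ofReal_integral_norm_eq_lintegral_enorm hint]
  simp [hnorm, hω1]

theorem IsBoundedDensity.L {i : ℕ} {t : S.X i → ℂ} (ht : S.IsBoundedDensity i t)
    (hBV : S.BV i t ≠ ⊤) : S.IsBoundedDensity (i + 1) (S.L i t) := by
  obtain ⟨ω, hωm, hω0, ⟨C, hωC⟩, hωt, hω1⟩ := ht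
  set g := S.L i (cR ω)
  have hgt : g =ᵐ[S.m (i + 1)] S.L i t := S.L_congr_ae hωt
  have hset : ∀ s, MeasurableSet s →
      ∫ y in s, g y ∂S.m (i + 1) = ((∫ x in S.T i ⁻¹' s, ω x ∂S.m i : ℝ) : ℂ) := fun s hs =>
    (S.setIntegral_L (Complex.measurable_ofReal.comp hωm)
      ⟨C, fun x => by simpa [cR, abs_of_nonneg (hω0 x)] using hωC x⟩ hs).trans integral_ofReal
  have hg1 : ∫ y, g y ∂S.m (i + 1) = 1 := by
    simpa [hω1] using hset Set.univ MeasurableSet.univ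
  -- `g` is integrable since its integral is not the junk value `0`.
  have hgint : Integrable g (S.m (i + 1)) := by
    by_contra h
    rw [integral_undef h] at hg1
    exact zero_ne_one hg1
  have hg0 : 0 ≤ᵐ[S.m (i + 1)] g := ae_nonneg_of_forall_setIntegral_nonneg_complex hgint
    fun s hs => hset s hs ▸ Complex.zero_le_real.2 (integral_nonneg fun x => hω0 x)
  have hgtop : eLpNorm g ⊤ (S.m (i + 1)) ≠ ⊤ := by
    rw [eLpNorm_congr_ae hgt]
    exact S.eLpNorm_top_ne_top (S.BV_L_ne_top hBV)
  obtain ⟨ω', hω'm, hω'0, hω'C, hω'g⟩ :=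
    exists_measurable_bounded_real_ae_eq hgint.aestronglyMeasurable hgtop hg0
  refine ⟨ω', hω'm, hω'0, hω'C, hω'g.trans hgt, ?_⟩
  exact Complex.ofReal_injective <|
    (integral_ofReal (𝕜 := ℂ)).symm.trans ((integral_congr_ae hω'g).trans hg1)

variable (S)

theorem isBoundedDensity_one (i : ℕ) : S.IsBoundedDensity i fun _ => 1 :=
  ⟨fun _ => 1, measurable_const, fun _ => zero_le_one, ⟨1, fun _ => le_rfl⟩,
    ae_of_all _ fun _ => by simp [cR], by simp⟩

theorem BV_iterL_one_le (j n : ℕ) :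
    S.BV (j + n) (iterL S.L j n fun _ => 1) ≤ max S.CL 1 ^ n * (1 + S.Cone) :=
  (S.BV_iterL_le j _ n).trans (by gcongr; exact S.BV_one_le j)

theorem max_CL_pow_mul_ne_top (n : ℕ) : max S.CL 1 ^ n * (1 + S.Cone) ≠ ⊤ :=
  ENNReal.mul_ne_top (ENNReal.pow_ne_top (max_lt S.CLFin (by simp)).ne)
    (ENNReal.add_ne_top.2 ⟨one_ne_top, S.ConeFin.ne⟩)

theorem BV_iterL_one_ne_top (j n : ℕ) : S.BV (j + n) (iterL S.L j n fun _ => 1) ≠ ⊤ :=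
  ne_top_of_le_ne_top (S.max_CL_pow_mul_ne_top n) (S.BV_iterL_one_le j n)

theorem isBoundedDensity_iterL_one (j : ℕ) :
    ∀ n, S.IsBoundedDensity (j + n) (iterL S.L j n fun _ => 1)
  | 0 => S.isBoundedDensity_one j
  | n + 1 => (isBoundedDensity_iterL_one j n).L (S.BV_iterL_one_ne_top j n)

theorem v_iterL_one_add_N_le (j n : ℕ) :
    S.v (j + (n + S.N)) (iterL S.L j (n + S.N) fun _ => 1) ≤
      S.ρ * S.v (j + n) (iterL S.L j n fun _ => 1) + S.K := by
  obtain ⟨ω, -, -, -, hω, -⟩ := S.isBoundedDensity_iterL_one j n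
  rw [iterL_add S.L j n _ S.N fun i f => S.v i f ≤ _]
  simpa [(S.isBoundedDensity_iterL_one j n).eLpNorm_one_eq] using S.v_iterL_N_le hω

theorem v_iterL_one_le (j n : ℕ) :
    S.v (j + n) (iterL S.L j n fun _ => 1) ≤
      max S.CL 1 ^ S.N * (1 + S.Cone) + (1 - S.ρ)⁻¹ * S.K :=
  ENNReal.le_of_le_mul_add_shift (x := fun n => S.v (j + n) (iterL S.L j n fun _ => 1)) S.ρlt
    (fun n => ne_top_of_le_ne_top (S.BV_iterL_one_ne_top j n) le_add_self)
    (fun n hn => le_add_self.trans <| (S.BV_iterL_one_le j n).trans <| by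
      gcongr
      exact le_max_right _ _)
    (S.v_iterL_one_add_N_le j) n

end SeqDSnoSC

/-- Assuming only (LY1) and (LY2), one has `sup_j sup_n ‖ℒ_j^n 𝟙‖_∞ < ∞`,
where `𝟙` is the constant function equal to `1`. -/
theorem sup_iterates_of_one_bounded (S : SeqDSnoSC.{u}) :
    ∃ c : ℝ≥0∞, c < ⊤ ∧ ∀ j n,
      eLpNorm (iterL S.L j n (fun _ => (1 : ℂ))) ⊤ (S.m (j+n)) ≤ c := by
  set M := max S.CL 1 ^ S.N * (1 + S.Cone) + (1 - S.ρ)⁻¹ * S.K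
  have hM : M ≠ ⊤ := ENNReal.add_ne_top.2 ⟨S.max_CL_pow_mul_ne_top S.N,
    ENNReal.mul_ne_top (ENNReal.inv_ne_top.2 (tsub_pos_of_lt S.ρlt).ne') S.KFin.ne⟩
  refine ⟨1 + S.Cvar * M, ENNReal.add_lt_top.2 ⟨one_lt_top, ENNReal.mul_lt_top S.CvarFin hM.lt_top⟩,
    fun j n => ?_⟩
  calc eLpNorm (iterL S.L j n fun _ => 1) ⊤ (S.m (j + n))
      ≤ eLpNorm (iterL S.L j n fun _ => 1) 1 (S.m (j + n)) +
          S.Cvar * S.v (j + n) (iterL S.L j n fun _ => 1) := S.V3 _ _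
    _ ≤ 1 + S.Cvar * M := by
      rw [(S.isBoundedDensity_iterL_one j n).eLpNorm_one_eq]
      gcongr
      exact S.v_iterL_one_le j n
end

section
/- (Sequential Sinai's lemma.) Fix α ∈ (0,1] and let ψ_j : X̃_j → ℝ, j ∈ ℤ, satisfy sup_j ‖ψ_j‖_α < ∞. Then there exist functions u_j : X̃_j → ℝ with sup_j ‖u_j‖_{α/2} < ∞ and functions φ_j : X_j → ℝ with sup_j ‖φ_j‖_{α/2} < ∞ such that for all j, ψ_j = u_j − u_{j+1}∘T̃_j + φ_j∘π_j. Moreover, if ‖ψ_j‖_α → 0 as j → ∞ then ‖u_j‖_{α/2} → 0. -/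
open Filter

/-- The two-sided sequential shift space `X̃_j`: admissible sequences `(x_{j+k})_{k∈ℤ}`,
where the symbol at relative position `k` belongs to the alphabet `𝓐_{j+k} = {0,…,d_{j+k}−1}`
and consecutive symbols are admissible for the 0-1 matrices `A^{(j+k)}`. -/
def TwoSided (d : ℤ → ℕ) (A : ∀ j : ℤ, ℕ → ℕ → Prop) (j : ℤ) : Type :=
  {x : ℤ → ℕ // (∀ k, x k < d (j + k)) ∧ (∀ k, A (j + k) (x k) (x (k+1)))}

/-- The one-sided sequential shift space `X_j`: admissible sequences `(x_{j+k})_{k≥0}`. -/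
def OneSided (d : ℤ → ℕ) (A : ∀ j : ℤ, ℕ → ℕ → Prop) (j : ℤ) : Type :=
  {x : ℕ → ℕ // (∀ k : ℕ, x k < d (j + k)) ∧ (∀ k : ℕ, A (j + k) (x k) (x (k+1)))}

variable {d : ℤ → ℕ} {A : ∀ j : ℤ, ℕ → ℕ → Prop}

/-- The left shift `T̃_j : X̃_j → X̃_{j+1}` on the two-sided shift spaces. -/
def shiftTwo (j : ℤ) (x : TwoSided d A j) : TwoSided d A (j+1) :=
  ⟨fun k => x.1 (k+1), by
    constructor
    · intro k
      have h := x.2.1 (k+1)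
      have e : j + (k + 1) = j + 1 + k := by ring
      rwa [e] at h
    · intro k
      have h := x.2.2 (k+1)
      have e : j + (k + 1) = j + 1 + k := by ring
      rw [e] at h
      exact h⟩

/-- The left shift `T_j : X_j → X_{j+1}` on the one-sided shift spaces. -/
def shiftOne (j : ℤ) (x : OneSided d A j) : OneSided d A (j+1) :=
  ⟨fun k => x.1 (k+1), by
    constructor
    · intro k
      have h := x.2.1 (k+1)
      have e : j + ((k : ℤ) + 1) = j + 1 + k := by push_cast; ring
      rw [← e]
      convert h using 3 <;> simp
    · intro k
      have h := x.2.2 (k+1)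
      have e : j + ((k : ℤ) + 1) = j + 1 + k := by push_cast; ring
      rw [← e]
      convert h using 3 <;> simp⟩

/-- The natural projection `π_j : X̃_j → X_j` forgetting the negatively-indexed coordinates. -/
def projSFT (j : ℤ) (x : TwoSided d A j) : OneSided d A j :=
  ⟨fun k => x.1 k, by
    constructor
    · intro k; exact x.2.1 k
    · intro k
      have h := x.2.2 (k : ℤ)
      convert h using 3 <;> simp⟩

open scoped Classical in
/-- The metric `d̃_j(x,y) = 2^{−inf{|k| : x_{j+k} ≠ y_{j+k}}}` on the two-sided shift space. -/
noncomputable def distTwo (j : ℤ) (x y : TwoSided d A j) : ℝ :=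
  if x.1 = y.1 then 0
  else (2 : ℝ) ^ (-(Int.ofNat (sInf {n : ℕ | ∃ k : ℤ, k.natAbs = n ∧ x.1 k ≠ y.1 k})))

open scoped Classical in
/-- The metric `d_j(x,y) = 2^{−inf{k ≥ 0 : x_{j+k} ≠ y_{j+k}}}` on the one-sided shift space. -/
noncomputable def distOne (j : ℤ) (x y : OneSided d A j) : ℝ :=
  if x.1 = y.1 then 0
  else (2 : ℝ) ^ (-(Int.ofNat (sInf {n : ℕ | x.1 n ≠ y.1 n})))

/-- `B` is a bound for the `β`-Hölder norm (sup norm plus `β`-Hölder constant) of a function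
on a space equipped with a distance function `dist`. -/
def HolderBound {X : Type*} (dist : X → X → ℝ) (β : ℝ) (B : ℝ) (f : X → ℝ) : Prop :=
  (∀ x, |f x| ≤ B) ∧ ∀ x y, |f x - f y| ≤ B * dist x y ^ β

/-- The mixing assumption: there is `M` such that for every `j` all entries of
`A^{(j)}·A^{(j+1)}⋯A^{(j+M)}` are positive, i.e. any symbol at time `j` can be connected to
any symbol at time `j+M+1` by an admissible word. -/
def MixingSFT (d : ℤ → ℕ) (A : ∀ j : ℤ, ℕ → ℕ → Prop) (M : ℕ) : Prop :=
  ∀ (j : ℤ) (a b : ℕ), a < d j → b < d (j + (M+1)) →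
    ∃ w : ℕ → ℕ, w 0 = a ∧ w (M+1) = b ∧
      (∀ k : ℕ, k ≤ M+1 → w k < d (j + k)) ∧
      (∀ k : ℕ, k ≤ M → A (j + k) (w k) (w (k+1)))

/-!
Choose once and for all an admissible past for every symbol (every symbol has a predecessor by
mixing), and let `x*` be the point with the future of `x` and the past chosen for `x 0`. Then
`u_j x = ∑ₙ (ψ_{j+n}(T̃ⁿ x) - ψ_{j+n}(T̃ⁿ x*))` converges geometrically, because `T̃ⁿ x` and
`T̃ⁿ x*` agree on `|k| < n`. Telescoping gives
`ψ_j x - u_j x + u_{j+1}(T̃_j x) = ψ_j x* + u_{j+1}(T̃_j x*)`, which depends only on the future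
of `x`; this is `φ_j (π_j x)`.

If `x` and `y` agree on `|k| < N`, the `n`-th term of `u_j x - u_j y` is at most a constant times
`2^{-α n}` and also at most a constant times `2^{-α (N - n)}`; summing the smaller of the two gives
`2^{-α N / 2}`, which is why the exponent halves. The constants only involve `‖ψ_{j+n}‖_α` for
`n ≥ 0`, so `‖u_j‖_{α/2}` is controlled by `sup_{i ≥ j} ‖ψ_i‖_α`.
-/

open Set

section Distances

variable {j : ℤ}

lemma distTwo_self (x : TwoSided d A j) : distTwo j x x = 0 := by simp [distTwo]

lemma distTwo_nonneg (x y : TwoSided d A j) : 0 ≤ distTwo j x y := by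
  unfold distTwo; split_ifs <;> positivity

lemma distOne_nonneg (x y : OneSided d A j) : 0 ≤ distOne j x y := by
  unfold distOne; split_ifs <;> positivity

lemma two_zpow_neg_ofNat (n : ℕ) : (2 : ℝ) ^ (-Int.ofNat n) = 2⁻¹ ^ n := by
  simp [zpow_neg, inv_pow]

lemma distTwo_le_of_eqOn {x y : TwoSided d A j} {N : ℕ}
    (h : EqOn x.1 y.1 {k | k.natAbs < N}) : distTwo j x y ≤ 2⁻¹ ^ N := by
  unfold distTwo
  split_ifs with hxy
  · positivity
  obtain ⟨k, hk⟩ := Function.ne_iff.mp hxy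
  have hS : {n | ∃ k : ℤ, k.natAbs = n ∧ x.1 k ≠ y.1 k}.Nonempty := ⟨_, k, rfl, hk⟩
  obtain ⟨k', hk', hne⟩ := Nat.sInf_mem hS
  rw [two_zpow_neg_ofNat]
  refine pow_le_pow_of_le_one (by norm_num) (by norm_num) (not_lt.1 fun hlt => hne (h ?_))
  simpa [hk'] using hlt

lemma distTwo_le_one (x y : TwoSided d A j) : distTwo j x y ≤ 1 := by
  simpa using distTwo_le_of_eqOn (N := 0) (x := x) (y := y) (by simp [EqOn])

lemma exists_eqOn_distTwo_eq {x y : TwoSided d A j} (hxy : x ≠ y) :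
    ∃ N : ℕ, EqOn x.1 y.1 {k | k.natAbs < N} ∧ distTwo j x y = 2⁻¹ ^ N := by
  set S := {n | ∃ k : ℤ, k.natAbs = n ∧ x.1 k ≠ y.1 k}
  refine ⟨sInf S, fun k hk => ?_, ?_⟩
  · by_contra hne
    exact (Nat.sInf_le (show k.natAbs ∈ S from ⟨k, rfl, hne⟩)).not_gt hk
  · rw [distTwo, if_neg (fun h => hxy (Subtype.ext h)), two_zpow_neg_ofNat]

lemma exists_eqOn_distOne_eq {x y : OneSided d A j} (hxy : x ≠ y) :
    ∃ N : ℕ, EqOn x.1 y.1 (Iio N) ∧ distOne j x y = 2⁻¹ ^ N := by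
  refine ⟨sInf {n | x.1 n ≠ y.1 n}, fun k hk => ?_, ?_⟩
  · by_contra hne
    exact not_le.2 hk (Nat.sInf_le hne)
  · rw [distOne, if_neg (fun h => hxy (Subtype.ext h)), two_zpow_neg_ofNat]

lemma distTwo_shiftTwo_le (x y : TwoSided d A j) :
    distTwo (j + 1) (shiftTwo j x) (shiftTwo j y) ≤ 2 * distTwo j x y := by
  rcases eq_or_ne x y with rfl | hxy
  · simp [distTwo_self]
  obtain ⟨N, hN, hdist⟩ := exists_eqOn_distTwo_eq hxy
  calc distTwo (j + 1) (shiftTwo j x) (shiftTwo j y) ≤ 2⁻¹ ^ (N - 1) :=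
        distTwo_le_of_eqOn fun k hk => hN (show (k + 1).natAbs < N by simp at hk; omega)
    _ ≤ 2 * distTwo j x y := by
        rw [hdist]
        rcases N with _ | N
        · norm_num
        · rw [Nat.add_sub_cancel, pow_succ, mul_left_comm, mul_inv_cancel₀ two_ne_zero, mul_one]

end Distances

namespace HolderBound

variable {X Y : Type*} {dist : X → X → ℝ} {β C C' : ℝ} {f g : X → ℝ}

lemma nonneg (hf : HolderBound dist β C f) (x : X) : 0 ≤ C := (abs_nonneg _).trans (hf.1 x)

lemma mono (hdist : ∀ x y, 0 ≤ dist x y) (hf : HolderBound dist β C f) (hC : C ≤ C') :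
    HolderBound dist β C' f :=
  ⟨fun x => (hf.1 x).trans hC, fun x y =>
    (hf.2 x y).trans (mul_le_mul_of_nonneg_right hC (Real.rpow_nonneg (hdist x y) _))⟩

lemma mono_exponent (hdist₀ : ∀ x y, 0 ≤ dist x y) (hdist₁ : ∀ x y, dist x y ≤ 1)
    (hf : HolderBound dist β C f) {β' : ℝ} (hβ' : 0 ≤ β') (hβ : β' ≤ β) :
    HolderBound dist β' C f :=
  ⟨hf.1, fun x y => (hf.2 x y).trans <| mul_le_mul_of_nonneg_left
    (Real.rpow_le_rpow_of_exponent_ge' (hdist₀ x y) (hdist₁ x y) hβ' hβ) (hf.nonneg x)⟩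

lemma add (hf : HolderBound dist β C f) (hg : HolderBound dist β C' g) :
    HolderBound dist β (C + C') (f + g) :=
  ⟨fun x => (abs_add_le _ _).trans (add_le_add (hf.1 x) (hg.1 x)), fun x y => by
    calc |(f + g) x - (f + g) y| ≤ |f x - f y| + |g x - g y| := by
          simpa [add_sub_add_comm] using abs_add_le (f x - f y) (g x - g y)
      _ ≤ _ := by rw [add_mul]; exact add_le_add (hf.2 x y) (hg.2 x y)⟩

lemma comp {dist' : Y → Y → ℝ} {f : Y → ℝ} {g : X → Y} {K : ℝ}
    (hf : HolderBound dist' β C f) (hβ : 0 ≤ β) (hK : 1 ≤ K) (hdist' : ∀ y y', 0 ≤ dist' y y')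
    (hg : ∀ x x', dist' (g x) (g x') ≤ K * dist x x') :
    HolderBound dist β (C * K ^ β) (f ∘ g) := by
  have hKβ : 1 ≤ K ^ β := Real.one_le_rpow hK hβ
  refine ⟨fun x => (hf.1 (g x)).trans (le_mul_of_one_le_right (hf.nonneg (g x)) hKβ),
    fun x x' => ?_⟩
  have hdist : 0 ≤ dist x x' :=
    nonneg_of_mul_nonneg_right ((hdist' _ _).trans (hg x x')) (by linarith)
  calc |f (g x) - f (g x')| ≤ C * dist' (g x) (g x') ^ β := hf.2 _ _
    _ ≤ C * (K * dist x x') ^ β :=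
        mul_le_mul_of_nonneg_left (Real.rpow_le_rpow (hdist' _ _) (hg x x') hβ) (hf.nonneg (g x))
    _ = C * K ^ β * dist x x' ^ β := by rw [Real.mul_rpow (by linarith) hdist, mul_assoc]

end HolderBound

section HolderOnTwoSided

variable {j : ℤ} {β C : ℝ} {f : TwoSided d A j → ℝ}

lemma HolderBound.abs_sub_le_of_eqOn (hf : HolderBound (distTwo j) β C f) (hβ : 0 ≤ β)
    {x y : TwoSided d A j} {N : ℕ} (h : EqOn x.1 y.1 {k | k.natAbs < N}) :
    |f x - f y| ≤ C * (2⁻¹ ^ β) ^ N :=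
  calc |f x - f y| ≤ C * distTwo j x y ^ β := hf.2 x y
    _ ≤ C * ((2⁻¹ : ℝ) ^ N) ^ β := mul_le_mul_of_nonneg_left
        (Real.rpow_le_rpow (distTwo_nonneg x y) (distTwo_le_of_eqOn h) hβ) (hf.nonneg x)
    _ = C * (2⁻¹ ^ β) ^ N := by rw [Real.rpow_pow_comm (by norm_num)]

lemma holderBound_distTwo_of_eqOn (hsup : ∀ x, |f x| ≤ C)
    (h : ∀ x y N, EqOn x.1 y.1 {k | k.natAbs < N} → |f x - f y| ≤ C * (2⁻¹ ^ β) ^ N) :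
    HolderBound (distTwo j) β C f := by
  refine ⟨hsup, fun x y => ?_⟩
  rcases eq_or_ne x y with rfl | hxy
  · simpa using mul_nonneg ((abs_nonneg _).trans (hsup x)) (Real.rpow_nonneg (distTwo_nonneg x x) β)
  · obtain ⟨N, hN, hdist⟩ := exists_eqOn_distTwo_eq hxy
    rw [hdist, ← Real.rpow_pow_comm (by norm_num)]
    exact h x y N hN

end HolderOnTwoSided

def HasPredecessors (d : ℤ → ℕ) (A : ℤ → ℕ → ℕ → Prop) : Prop :=
  ∀ j a, a < d (j + 1) → ∃ a' < d j, A j a' a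

lemma MixingSFT.hasPredecessors {M : ℕ} (hd : ∀ j, 1 ≤ d j) (hmix : MixingSFT d A M) :
    HasPredecessors d A := by
  intro j a ha
  obtain ⟨w, -, hwM, hwlt, hwA⟩ :=
    hmix (j - M) 0 a (hd _) (by rwa [show j - M + (M + 1 : ℤ) = j + 1 by ring])
  have hj : j - M + (M : ℕ) = j := sub_add_cancel _ _
  exact ⟨w M, by simpa [hj] using hwlt M M.le_succ, by simpa [hj, hwM] using hwA M le_rfl⟩

lemma add_negSucc_eq_sub (j : ℤ) (m : ℕ) : j + Int.negSucc m = j - (m + 1) := by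
  rw [Int.negSucc_eq, sub_eq_add_neg]

lemma OneSided.head_lt {j : ℤ} (y : OneSided d A j) : y.1 0 < d j := by simpa using y.2.1 0

namespace HasPredecessors

variable (h : HasPredecessors d A) {j : ℤ}

noncomputable def pred (j : ℤ) (a : ℕ) : ℕ :=
  if ha : a < d (j + 1) then (h j a ha).choose else 0

lemma pred_spec {a : ℕ} (ha : a < d (j + 1)) : h.pred j a < d j ∧ A j (h.pred j a) a := by
  rw [pred, dif_pos ha]
  exact (h j a ha).choose_spec

/-- `h.past j a m` is a symbol at time `j - m`; together they form an admissible past of `a`. -/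
noncomputable def past (j : ℤ) (a : ℕ) : ℕ → ℕ
  | 0 => a
  | m + 1 => h.pred (j - (m + 1)) (past j a m)

lemma past_lt {a : ℕ} (ha : a < d j) : ∀ m : ℕ, h.past j a m < d (j - m)
  | 0 => by simpa [past] using ha
  | m + 1 => by
    have hm : h.past j a m < d (j - (m + 1) + 1) := by
      rw [show j - (m + 1 : ℤ) + 1 = j - m by ring]; exact past_lt ha m
    simpa [past] using (h.pred_spec hm).1

lemma past_adj {a : ℕ} (ha : a < d j) (m : ℕ) :
    A (j - (m + 1)) (h.past j a (m + 1)) (h.past j a m) :=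
  (h.pred_spec (by rw [show j - (m + 1 : ℤ) + 1 = j - m by ring]; exact h.past_lt ha m)).2

noncomputable def extendSeq (y : OneSided d A j) : ℤ → ℕ
  | (n : ℕ) => y.1 n
  | .negSucc m => h.past j (y.1 0) (m + 1)

lemma extendSeq_lt (y : OneSided d A j) : ∀ k, h.extendSeq y k < d (j + k)
  | (n : ℕ) => y.2.1 n
  | .negSucc m => by
    rw [add_negSucc_eq_sub]
    exact_mod_cast h.past_lt y.head_lt (m + 1)

lemma extendSeq_adj (y : OneSided d A j) :
    ∀ k, A (j + k) (h.extendSeq y k) (h.extendSeq y (k + 1))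
  | (n : ℕ) => y.2.2 n
  | .negSucc 0 => by
    show A _ (h.past j (y.1 0) 1) (y.1 0)
    rw [add_negSucc_eq_sub]
    exact_mod_cast h.past_adj y.head_lt 0
  | .negSucc (m + 1) => by
    show A _ (h.past j (y.1 0) (m + 2)) (h.past j (y.1 0) (m + 1))
    rw [add_negSucc_eq_sub]
    exact_mod_cast h.past_adj y.head_lt (m + 1)

noncomputable def extend (j : ℤ) (y : OneSided d A j) : TwoSided d A j :=
  ⟨h.extendSeq y, h.extendSeq_lt y, h.extendSeq_adj y⟩

lemma extend_eqOn {y y' : OneSided d A j} {N : ℕ} (hN : 0 < N) (hyy' : EqOn y.1 y'.1 (Iio N)) :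
    EqOn (h.extend j y).1 (h.extend j y').1 (Iio N) := by
  rintro (n | m) hk
  · exact hyy' (by simpa using hk)
  · simp only [extend, extendSeq, hyy' hN]

lemma distTwo_extend_le (y y' : OneSided d A j) :
    distTwo j (h.extend j y) (h.extend j y') ≤ distOne j y y' := by
  rcases eq_or_ne y y' with rfl | hyy'
  · simp [distTwo_self, distOne_nonneg]
  obtain ⟨N, hN, hdist⟩ := exists_eqOn_distOne_eq hyy'
  rw [hdist]
  rcases N.eq_zero_or_pos with rfl | hN0
  · simpa using distTwo_le_one _ _
  · exact distTwo_le_of_eqOn ((h.extend_eqOn hN0 hN).mono fun k hk => by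
      simp only [mem_ofPred_eq, mem_Iio] at hk ⊢; omega)

/-- `x*`: the future of `x` with the past chosen by `h.past` from `x 0`. -/
noncomputable def fixPast (j : ℤ) (x : TwoSided d A j) : TwoSided d A j :=
  h.extend j (projSFT j x)

lemma fixPast_apply_of_nonneg (x : TwoSided d A j) {k : ℤ} (hk : 0 ≤ k) :
    (h.fixPast j x).1 k = x.1 k := by
  lift k to ℕ using hk
  rfl

lemma fixPast_eqOn {x y : TwoSided d A j} {N : ℕ} (hxy : EqOn x.1 y.1 {k | k.natAbs < N}) :
    EqOn (h.fixPast j x).1 (h.fixPast j y).1 {k | k.natAbs < N} := by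
  rcases N.eq_zero_or_pos with rfl | hN
  · simp [EqOn]
  refine (h.extend_eqOn hN fun i hi => hxy ?_).mono fun k hk => ?_
  · simp only [mem_ofPred_eq, mem_Iio] at hi ⊢; omega
  · simp only [mem_ofPred_eq, mem_Iio] at hk ⊢; omega

lemma projSFT_shiftTwo_fixPast (x : TwoSided d A j) :
    projSFT (j + 1) (shiftTwo j (h.fixPast j x)) = projSFT (j + 1) (shiftTwo j x) :=
  rfl

end HasPredecessors

lemma summable_pow_max_sub {r : ℝ} (hr₀ : 0 ≤ r) (hr₁ : r < 1) (N : ℕ) :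
    Summable (fun n => r ^ max n (N - n)) :=
  (summable_geometric_of_lt_one hr₀ hr₁).of_nonneg_of_le (fun n => by positivity)
    fun n => pow_le_pow_of_le_one hr₀ hr₁.le (le_max_left _ _)

lemma tsum_pow_max_sub_le {r : ℝ} (hr₀ : 0 ≤ r) (hr₁ : r < 1) (N : ℕ) :
    ∑' n, r ^ max n (N - n) ≤ 2 * (1 - r)⁻¹ * r ^ (N - N / 2) := by
  set c := N - N / 2
  have hgeom := summable_geometric_of_lt_one hr₀ hr₁
  have hs := summable_pow_max_sub hr₀ hr₁ N
  rw [← hs.sum_add_tsum_nat_add c]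
  have head : ∑ n ∈ Finset.range c, r ^ max n (N - n) ≤ r ^ c * (1 - r)⁻¹ :=
    calc ∑ n ∈ Finset.range c, r ^ max n (N - n)
        ≤ ∑ n ∈ Finset.range c, r ^ c * r ^ (c - 1 - n) := Finset.sum_le_sum fun n hn => by
          rw [← pow_add]
          exact pow_le_pow_of_le_one hr₀ hr₁.le (by simp only [Finset.mem_range] at hn; omega)
      _ = r ^ c * ∑ i ∈ Finset.range c, r ^ i := by
          rw [← Finset.mul_sum, Finset.sum_range_reflect (r ^ ·) c]
      _ ≤ r ^ c * (1 - r)⁻¹ := by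
          gcongr
          rw [← tsum_geometric_of_lt_one hr₀ hr₁]
          exact hgeom.sum_le_tsum _ fun i _ => by positivity
  have tail : ∑' n, r ^ max (n + c) (N - (n + c)) ≤ r ^ c * (1 - r)⁻¹ :=
    calc ∑' n, r ^ max (n + c) (N - (n + c)) ≤ ∑' n, r ^ c * r ^ n :=
          ((summable_nat_add_iff c).2 hs).tsum_le_tsum
            (fun n => by
              rw [← pow_add]
              exact pow_le_pow_of_le_one hr₀ hr₁.le (by omega))
            (hgeom.mul_left _)
      _ = r ^ c * (1 - r)⁻¹ := by rw [tsum_mul_left, tsum_geometric_of_lt_one hr₀ hr₁]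
  linarith

lemma two_inv_rpow_pow_le {α : ℝ} (hα : 0 ≤ α) (N : ℕ) :
    ((2⁻¹ : ℝ) ^ α) ^ (N - N / 2) ≤ ((2⁻¹ : ℝ) ^ (α / 2)) ^ N := by
  rw [show (2⁻¹ : ℝ) ^ α = ((2⁻¹ : ℝ) ^ (α / 2)) ^ 2 by
    rw [← Real.rpow_mul_natCast (by norm_num)]; norm_num, ← pow_mul]
  exact pow_le_pow_of_le_one (by positivity)
    (Real.rpow_le_one (by norm_num) (by norm_num) (by positivity)) (by omega)

def iterShift (j : ℤ) (n : ℕ) (x : TwoSided d A j) : TwoSided d A (j + n) :=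
  ⟨fun k => x.1 (k + n), fun k => by simpa [add_right_comm, add_assoc] using x.2.1 (k + n),
    fun k => by simpa [add_right_comm, add_assoc] using x.2.2 (k + n)⟩

lemma TwoSided.apply_congr {β : Type*} (f : ∀ j, TwoSided d A j → β) {j j' : ℤ} (hj : j = j')
    {x : TwoSided d A j} {x' : TwoSided d A j'} (hx : x.1 = x'.1) : f j x = f j' x' := by
  subst hj
  rw [Subtype.ext hx]

section IterShift

variable {β : Type*} (f : ∀ j, TwoSided d A j → β) {j : ℤ}

lemma apply_iterShift_zero (x : TwoSided d A j) : f (j + (0 : ℕ)) (iterShift j 0 x) = f j x :=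
  TwoSided.apply_congr f (by simp) (funext fun k => by simp [iterShift])

lemma apply_iterShift_shiftTwo (n : ℕ) (x : TwoSided d A j) :
    f (j + 1 + n) (iterShift (j + 1) n (shiftTwo j x)) =
      f (j + (n + 1 : ℕ)) (iterShift j (n + 1) x) :=
  TwoSided.apply_congr f (by push_cast; ring) (funext fun k => by
    simp only [iterShift, shiftTwo]; push_cast; ring_nf)

lemma iterShift_eqOn {x y : TwoSided d A j} {N : ℕ} (n : ℕ) (h : EqOn x.1 y.1 {k | k.natAbs < N}) :
    EqOn (iterShift j n x).1 (iterShift j n y).1 {k | k.natAbs < N - n} := fun k hk =>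
  h (show (k + n).natAbs < N by simp only [mem_ofPred_eq] at hk; omega)

end IterShift

namespace HasPredecessors

variable (h : HasPredecessors d A) (ψ : ∀ j, TwoSided d A j → ℝ) {j : ℤ}

noncomputable def transferTerm (j : ℤ) (n : ℕ) (x : TwoSided d A j) : ℝ :=
  ψ (j + n) (iterShift j n x) - ψ (j + n) (iterShift j n (h.fixPast j x))

noncomputable def transfer (j : ℤ) (x : TwoSided d A j) : ℝ :=
  ∑' n, h.transferTerm ψ j n x

noncomputable def reducedPotential (j : ℤ) (y : OneSided d A j) : ℝ :=
  ψ j (h.extend j y) + h.transfer ψ (j + 1) (shiftTwo j (h.extend j y))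

variable {ψ} {α B S : ℝ}

lemma abs_transferTerm_le (hα : 0 ≤ α) {n : ℕ} (hS : HolderBound (distTwo (j + n)) α S (ψ (j + n)))
    (x : TwoSided d A j) : |h.transferTerm ψ j n x| ≤ S * (2⁻¹ ^ α) ^ n :=
  hS.abs_sub_le_of_eqOn hα fun k hk =>
    (h.fixPast_apply_of_nonneg x (by simp only [mem_ofPred_eq] at hk; omega)).symm

lemma abs_transferTerm_sub_le (hα : 0 ≤ α) {n : ℕ}
    (hS : HolderBound (distTwo (j + n)) α S (ψ (j + n))) {x y : TwoSided d A j} {N : ℕ}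
    (hxy : EqOn x.1 y.1 {k | k.natAbs < N}) :
    |h.transferTerm ψ j n x - h.transferTerm ψ j n y| ≤ 2 * S * (2⁻¹ ^ α) ^ max n (N - n) := by
  rcases le_total (N - n) n with hle | hle
  · rw [max_eq_left hle]
    linarith [abs_sub (h.transferTerm ψ j n x) (h.transferTerm ψ j n y),
      h.abs_transferTerm_le hα hS x, h.abs_transferTerm_le hα hS y]
  · rw [max_eq_right hle]
    have hx := hS.abs_sub_le_of_eqOn hα (iterShift_eqOn n hxy)
    have hfix := hS.abs_sub_le_of_eqOn hα (iterShift_eqOn n (h.fixPast_eqOn hxy))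
    rw [transferTerm, transferTerm, sub_sub_sub_comm]
    linarith [abs_sub (ψ (j + n) (iterShift j n x) - ψ (j + n) (iterShift j n y))
      (ψ (j + n) (iterShift j n (h.fixPast j x)) - ψ (j + n) (iterShift j n (h.fixPast j y)))]

lemma summable_transferTerm (hα : 0 < α)
    (hS : ∀ n : ℕ, HolderBound (distTwo (j + n)) α S (ψ (j + n)))
    (x : TwoSided d A j) : Summable (fun n => h.transferTerm ψ j n x) :=
  .of_norm_bounded ((summable_geometric_of_lt_one (by positivity)
    (Real.rpow_lt_one (by norm_num) (by norm_num) hα)).mul_left S)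
    fun n => h.abs_transferTerm_le hα.le (hS n) x

lemma holderBound_transfer (hα : 0 < α)
    (hS : ∀ n : ℕ, HolderBound (distTwo (j + n)) α S (ψ (j + n))) :
    HolderBound (distTwo j) (α / 2) (4 * (1 - 2⁻¹ ^ α)⁻¹ * S) (h.transfer ψ j) := by
  set r : ℝ := 2⁻¹ ^ α
  have hr₀ : 0 ≤ r := by positivity
  have hr₁ : r < 1 := Real.rpow_lt_one (by norm_num) (by norm_num) hα
  have hS₀ (x : TwoSided d A j) : 0 ≤ S := (hS 0).nonneg (iterShift j 0 x)
  refine holderBound_distTwo_of_eqOn (fun x => ?_) fun x y N hxy => ?_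
  · have := hS₀ x
    calc |h.transfer ψ j x| ≤ S * (1 - r)⁻¹ := by
          rw [transfer, ← Real.norm_eq_abs]
          exact tsum_of_norm_bounded ((hasSum_geometric_of_lt_one hr₀ hr₁).mul_left S)
            fun n => (Real.norm_eq_abs _).trans_le (h.abs_transferTerm_le hα.le (hS n) x)
      _ ≤ 4 * (1 - r)⁻¹ * S := by
          have : 0 ≤ (1 - r)⁻¹ := inv_nonneg.2 (by linarith)
          nlinarith
  · have := hS₀ x
    calc |h.transfer ψ j x - h.transfer ψ j y|
        = |∑' n, (h.transferTerm ψ j n x - h.transferTerm ψ j n y)| := by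
          rw [transfer, transfer, (h.summable_transferTerm hα hS x).tsum_sub
            (h.summable_transferTerm hα hS y)]
      _ ≤ ∑' n, 2 * S * r ^ max n (N - n) := by
          rw [← Real.norm_eq_abs]
          exact tsum_of_norm_bounded ((summable_pow_max_sub hr₀ hr₁ N).mul_left _).hasSum
            fun n => (Real.norm_eq_abs _).trans_le (h.abs_transferTerm_sub_le hα.le (hS n) hxy)
      _ ≤ 2 * S * (2 * (1 - r)⁻¹ * (2⁻¹ ^ (α / 2)) ^ N) := by
          rw [tsum_mul_left]
          gcongr
          exact (tsum_pow_max_sub_le hr₀ hr₁ N).trans (by gcongr; exact two_inv_rpow_pow_le hα.le N)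
      _ = 4 * (1 - r)⁻¹ * S * (2⁻¹ ^ (α / 2)) ^ N := by ring

lemma transferTerm_shiftTwo_sub (n : ℕ) (x : TwoSided d A j) :
    h.transferTerm ψ (j + 1) n (shiftTwo j x) -
        h.transferTerm ψ (j + 1) n (shiftTwo j (h.fixPast j x)) =
      h.transferTerm ψ j (n + 1) x := by
  have hfix : h.fixPast (j + 1) (shiftTwo j (h.fixPast j x)) = h.fixPast (j + 1) (shiftTwo j x) :=
    congrArg (h.extend (j + 1)) (h.projSFT_shiftTwo_fixPast x)
  simp only [transferTerm, hfix, apply_iterShift_shiftTwo]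
  ring

lemma eq_transfer_sub_add_reducedPotential (hα : 0 < α)
    (hψ : ∀ j, HolderBound (distTwo j) α B (ψ j)) (x : TwoSided d A j) :
    ψ j x = h.transfer ψ j x - h.transfer ψ (j + 1) (shiftTwo j x) +
      h.reducedPotential ψ j (projSFT j x) := by
  have hsplit : h.transfer ψ j x = h.transferTerm ψ j 0 x + ∑' n, h.transferTerm ψ j (n + 1) x :=
    (h.summable_transferTerm hα (fun n => hψ _) x).tsum_eq_zero_add
  have hshift : h.transfer ψ (j + 1) (shiftTwo j x) -
      h.transfer ψ (j + 1) (shiftTwo j (h.fixPast j x)) = ∑' n, h.transferTerm ψ j (n + 1) x := by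
    rw [transfer, transfer, ← (h.summable_transferTerm hα (fun n => hψ _) _).tsum_sub
      (h.summable_transferTerm hα (fun n => hψ _) _)]
    exact tsum_congr fun n => h.transferTerm_shiftTwo_sub n x
  have hzero : h.transferTerm ψ j 0 x = ψ j x - ψ j (h.fixPast j x) := by
    simp only [transferTerm, apply_iterShift_zero]
  have hφ : h.reducedPotential ψ j (projSFT j x) =
      ψ j (h.fixPast j x) + h.transfer ψ (j + 1) (shiftTwo j (h.fixPast j x)) := rfl
  rw [hφ, hsplit, hzero]
  linarith

lemma holderBound_reducedPotential (hα : 0 < α) (hψ : ∀ j, HolderBound (distTwo j) α B (ψ j))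
    (j : ℤ) : HolderBound (distOne j) (α / 2)
      (B + 4 * (1 - 2⁻¹ ^ α)⁻¹ * B * 2 ^ (α / 2)) (h.reducedPotential ψ j) := by
  have hψe : HolderBound (distOne j) (α / 2) B (ψ j ∘ h.extend j) := by
    simpa using ((hψ j).mono_exponent distTwo_nonneg distTwo_le_one (by positivity)
      (by linarith)).comp (by positivity) le_rfl distTwo_nonneg fun y y' => by
        simpa using h.distTwo_extend_le y y'
  have hue : HolderBound (distOne j) (α / 2) (4 * (1 - 2⁻¹ ^ α)⁻¹ * B * 2 ^ (α / 2))
      (h.transfer ψ (j + 1) ∘ (shiftTwo j ∘ h.extend j)) :=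
    (h.holderBound_transfer hα fun n => hψ _).comp (by positivity) one_le_two distTwo_nonneg
      fun y y' => (distTwo_shiftTwo_le _ _).trans (by gcongr; exact h.distTwo_extend_le y y')
  exact hψe.add hue

end HasPredecessors

lemma bddAbove_range_add_nat {b : ℤ → ℝ} {l : ℝ} (hb : Tendsto b atTop (nhds l)) (j : ℤ) :
    BddAbove (range fun n : ℕ => b (j + n)) :=
  (hb.comp (tendsto_atTop_add_const_left atTop j tendsto_natCast_atTop_atTop)).bddAbove_range

lemma tendsto_ciSup_add_nat {b : ℤ → ℝ} {l : ℝ} (hb : Tendsto b atTop (nhds l)) :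
    Tendsto (fun j => ⨆ n : ℕ, b (j + n)) atTop (nhds l) := by
  refine tendsto_order.2 ⟨fun a ha => ?_, fun a ha => ?_⟩
  · filter_upwards [hb.eventually_const_lt ha] with j hj
    exact hj.trans_le (by simpa using le_ciSup (bddAbove_range_add_nat hb j) 0)
  · obtain ⟨c, hlc, hca⟩ := exists_between ha
    obtain ⟨J, hJ⟩ := eventually_atTop.1 (hb.eventually_lt_const hlc)
    filter_upwards [eventually_ge_atTop J] with j hj
    exact (ciSup_le fun n => (hJ _ (by omega)).le).trans_lt hca

theorem sequential_sinai_lemma_general (d : ℤ → ℕ) (A : ∀ j : ℤ, ℕ → ℕ → Prop)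
    (hd : ∀ j, 1 ≤ d j)
    (M : ℕ) (hmix : MixingSFT d A M)
    (α : ℝ) (hα0 : 0 < α)
    (ψ : ∀ j : ℤ, TwoSided d A j → ℝ)
    (B : ℝ) (hψ : ∀ j, HolderBound (distTwo j) α B (ψ j)) :
    ∃ (u : ∀ j : ℤ, TwoSided d A j → ℝ) (φ : ∀ j : ℤ, OneSided d A j → ℝ) (B' : ℝ),
      (∀ j, HolderBound (distTwo j) (α/2) B' (u j)) ∧
      (∀ j, HolderBound (distOne j) (α/2) B' (φ j)) ∧
      (∀ j x, ψ j x = u j x - u (j+1) (shiftTwo j x) + φ j (projSFT j x)) ∧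
      -- if `‖ψ_j‖_α → 0` as `j → ∞` then `‖u_j‖_{α/2} → 0` :
      (∀ b : ℤ → ℝ, (∀ j, HolderBound (distTwo j) α (b j) (ψ j)) →
        Tendsto b atTop (nhds 0) →
        ∃ c : ℤ → ℝ, (∀ j, HolderBound (distTwo j) (α/2) (c j) (u j)) ∧
          Tendsto c atTop (nhds 0)) := by
  have h := hmix.hasPredecessors hd
  set K : ℝ := 4 * (1 - 2⁻¹ ^ α)⁻¹
  refine ⟨h.transfer ψ, h.reducedPotential ψ, max (K * B) (B + K * B * 2 ^ (α / 2)),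
    fun j => ?_, fun j => ?_, fun _ => h.eq_transfer_sub_add_reducedPotential hα0 hψ, ?_⟩
  · exact (h.holderBound_transfer hα0 fun n => hψ _).mono distTwo_nonneg (le_max_left _ _)
  · exact (h.holderBound_reducedPotential hα0 hψ j).mono distOne_nonneg (le_max_right _ _)
  · intro b hb hlim
    refine ⟨fun j => K * ⨆ n : ℕ, b (j + n), fun j => h.holderBound_transfer hα0 fun n =>
      (hb _).mono distTwo_nonneg (le_ciSup (bddAbove_range_add_nat hlim j) n), ?_⟩
    simpa using (tendsto_ciSup_add_nat hlim).const_mul K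

/-- **Sequential Sinai lemma.**  Let `ψ_j : X̃_j → ℝ`, `j ∈ ℤ`, satisfy
`sup_j ‖ψ_j‖_α < ∞` for some `α ∈ (0,1]`.  Then there are `u_j : X̃_j → ℝ` and
`φ_j : X_j → ℝ` with `sup_j ‖u_j‖_{α/2} < ∞` and `sup_j ‖φ_j‖_{α/2} < ∞` such that
`ψ_j = u_j − u_{j+1}∘T̃_j + φ_j∘π_j` for all `j`; moreover if `‖ψ_j‖_α → 0` as `j → ∞`
then `‖u_j‖_{α/2} → 0`. -/
theorem sequential_sinai_lemma (d : ℤ → ℕ) (A : ∀ j : ℤ, ℕ → ℕ → Prop)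
    (D : ℕ) (hD : ∀ j, d j ≤ D) (hd : ∀ j, 1 ≤ d j)
    (M : ℕ) (hmix : MixingSFT d A M)
    (α : ℝ) (hα0 : 0 < α) (hα1 : α ≤ 1)
    (ψ : ∀ j : ℤ, TwoSided d A j → ℝ)
    (B : ℝ) (hψ : ∀ j, HolderBound (distTwo j) α B (ψ j)) :
    ∃ (u : ∀ j : ℤ, TwoSided d A j → ℝ) (φ : ∀ j : ℤ, OneSided d A j → ℝ) (B' : ℝ),
      (∀ j, HolderBound (distTwo j) (α/2) B' (u j)) ∧
      (∀ j, HolderBound (distOne j) (α/2) B' (φ j)) ∧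
      (∀ j x, ψ j x = u j x - u (j+1) (shiftTwo j x) + φ j (projSFT j x)) ∧
      -- if `‖ψ_j‖_α → 0` as `j → ∞` then `‖u_j‖_{α/2} → 0` :
      (∀ b : ℤ → ℝ, (∀ j, HolderBound (distTwo j) α (b j) (ψ j)) →
        Tendsto b atTop (nhds 0) →
        ∃ c : ℤ → ℝ, (∀ j, HolderBound (distTwo j) (α/2) (c j) (u j)) ∧
          Tendsto c atTop (nhds 0)) :=
  sequential_sinai_lemma_general d A hd M hmix α hα0 ψ B hψ
end
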